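/- Dual weight increment identity: let w be weights on the rectangle R = {z : u ≤ z ≤ v} and define dual weights w*_x for x ∈ R by: w*_x = min(Î_{u,x+e1}(w), Ĵ_{u,x+e2}(w)) if x ≤ v − e1 − e2; w*_x = Î_{u,x+e1}(w) if x·e2 = v·e2 and x < v; w*_x = Ĵ_{u,x+e2}(w) if x·e1 = v·e1 and x < v; and w*_v = 0. Then for x ∈ R with x + e1 ≤ v, I_{x,v}(w*) = Î_{u,x+e1}(w), and for x ∈ R with x + e2 ≤ v, J_{x,v}(w*) = Ĵ_{u,x+e2}(w). -/

import Mathlib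

open scoped BigOperators

/-- An up-right path of length `n` in `ℤ²`: each step is `e1 = (1,0)` or `e2 = (0,1)`. -/
def IsUpRight (n : ℕ) (π : ℕ → ℤ × ℤ) : Prop :=
  ∀ i < n, π (i + 1) = π i + (1, 0) ∨ π (i + 1) = π i + (0, 1)

/-- The last-passage time `L_{x,y}(w)`: the supremum (a maximum over the finitely many
up-right paths from `x` to `y`, including both endpoints) of the path weight sums,
with value `⊥ = -∞` when `x ≤ y` fails (empty set of paths). -/
noncomputable def lpp (w : ℤ × ℤ → ℝ) (x y : ℤ × ℤ) : EReal :=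
  sSup {s : EReal | ∃ n : ℕ, ∃ π : ℕ → ℤ × ℤ,
    π 0 = x ∧ π n = y ∧ IsUpRight n π ∧
    s = ((∑ i ∈ Finset.range (n + 1), w (π i) : ℝ) : EReal)}

/-- Increment with respect to the initial point: `I_{x,y} = L_{x,y} - L_{x+e1,y}`. -/
noncomputable def incI (w : ℤ × ℤ → ℝ) (x y : ℤ × ℤ) : EReal :=
  lpp w x y - lpp w (x + (1, 0)) y

/-- Increment with respect to the initial point: `J_{x,y} = L_{x,y} - L_{x+e2,y}`. -/
noncomputable def incJ (w : ℤ × ℤ → ℝ) (x y : ℤ × ℤ) : EReal :=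
  lpp w x y - lpp w (x + (0, 1)) y

/-- Increment with respect to the terminal point: `Î_{x,y} = L_{x,y} - L_{x,y-e1}`. -/
noncomputable def incIhat (w : ℤ × ℤ → ℝ) (x y : ℤ × ℤ) : EReal :=
  lpp w x y - lpp w x (y - (1, 0))

/-- Increment with respect to the terminal point: `Ĵ_{x,y} = L_{x,y} - L_{x,y-e2}`. -/
noncomputable def incJhat (w : ℤ × ℤ → ℝ) (x y : ℤ × ℤ) : EReal :=
  lpp w x y - lpp w x (y - (0, 1))

/-- Real-valued terminal-point increments (the `EReal` increments are real in the cases used). -/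
noncomputable def incIhatR (w : ℤ × ℤ → ℝ) (x y : ℤ × ℤ) : ℝ := (incIhat w x y).toReal

noncomputable def incJhatR (w : ℤ × ℤ → ℝ) (x y : ℤ × ℤ) : ℝ := (incJhat w x y).toReal

/-- The dual weights `w*` on the rectangle with corners `u ≤ v`:
`w*_x = Î_{u,x+e1} ∧ Ĵ_{u,x+e2}` in the interior, `w*_x = Î_{u,x+e1}` on the north edge,
`w*_x = Ĵ_{u,x+e2}` on the east edge, and `w*_v = 0`. -/
noncomputable def dualWt (w : ℤ × ℤ → ℝ) (u v : ℤ × ℤ) (x : ℤ × ℤ) : ℝ :=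
  if x = v then 0
  else if x.2 = v.2 then incIhatR w u (x + (1, 0))
  else if x.1 = v.1 then incJhatR w u (x + (0, 1))
  else min (incIhatR w u (x + (1, 0))) (incJhatR w u (x + (0, 1)))

/-!
Writing `L = L(w)` and `L* = L(w*)`, one shows `L*_{x,v} = L_{u,v} - L_{u,x}` for `u ≤ x ≤ v`
by backward induction from the corner `v`, using `L_{x,v} = w_x + max (L_{x+e1,v}, L_{x+e2,v})`.
At an interior point `w*_x = min (p, q) - L_{u,x}` with `p = L_{u,x+e1}`, `q = L_{u,x+e2}`, and
`min (p, q) + max (K - p, K - q) = K`; on the edges only one term is present.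
The increment identities are differences of two instances of this formula.
-/

local notation "e₁" => ((1, 0) : ℤ × ℤ)
local notation "e₂" => ((0, 1) : ℤ × ℤ)

section Lattice

variable {x y : ℤ × ℤ}

theorem add_e₁_le_iff : x + e₁ ≤ y ↔ x.1 < y.1 ∧ x.2 ≤ y.2 := by
  simp only [Prod.le_def, Prod.fst_add, Prod.snd_add]
  omega

theorem add_e₂_le_iff : x + e₂ ≤ y ↔ x.1 ≤ y.1 ∧ x.2 < y.2 := by
  simp only [Prod.le_def, Prod.fst_add, Prod.snd_add]
  omega

theorem le_add_e₁ (x : ℤ × ℤ) : x ≤ x + e₁ := by simp [Prod.le_def]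

theorem le_add_e₂ (x : ℤ × ℤ) : x ≤ x + e₂ := by simp [Prod.le_def]

theorem eq_of_le_of_not_add_le (h : x ≤ y) (h₁ : ¬ x + e₁ ≤ y) (h₂ : ¬ x + e₂ ≤ y) : x = y := by
  rw [add_e₁_le_iff] at h₁
  rw [add_e₂_le_iff] at h₂
  rw [Prod.le_def] at h
  exact Prod.ext (by omega) (by omega)

theorem backward_induction {P : ℤ × ℤ → Prop}
    (step : ∀ x ≤ y, (x + e₁ ≤ y → P (x + e₁)) → (x + e₂ ≤ y → P (x + e₂)) → P x)
    (x : ℤ × ℤ) (hx : x ≤ y) : P x :=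
  step x hx (fun h ↦ backward_induction step _ h) (fun h ↦ backward_induction step _ h)
termination_by (y.1 - x.1 + (y.2 - x.2)).toNat
decreasing_by
  · rw [add_e₁_le_iff] at h; simp only [Prod.fst_add, Prod.snd_add]; omega
  · rw [add_e₂_le_iff] at h; simp only [Prod.fst_add, Prod.snd_add]; omega

theorem IsUpRight.le_apply {n : ℕ} {π : ℕ → ℤ × ℤ} (h : IsUpRight n π) :
    ∀ i ≤ n, π 0 ≤ π i
  | 0, _ => le_rfl
  | i + 1, hi => (h.le_apply i (by omega)).trans <| by
      rcases h i (by omega) with hs | hs <;> simp [hs, Prod.le_def]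

theorem IsUpRight.fst_add_snd_apply {n : ℕ} {π : ℕ → ℤ × ℤ} (h : IsUpRight n π) :
    ∀ i ≤ n, (π i).1 + (π i).2 = (π 0).1 + (π 0).2 + i
  | 0, _ => by simp
  | i + 1, hi => by
      have := h.fst_add_snd_apply i (by omega)
      rcases h i (by omega) with hs | hs <;> simp only [hs, Prod.fst_add, Prod.snd_add] <;> omega

end Lattice

section PathWeights

variable {w : ℤ × ℤ → ℝ} {x y : ℤ × ℤ}

def pathWeights (w : ℤ × ℤ → ℝ) (x y : ℤ × ℤ) : Set EReal :=
  {s : EReal | ∃ n : ℕ, ∃ π : ℕ → ℤ × ℤ,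
    π 0 = x ∧ π n = y ∧ IsUpRight n π ∧
    s = ((∑ i ∈ Finset.range (n + 1), w (π i) : ℝ) : EReal)}

theorem lpp_eq_sSup_pathWeights (w : ℤ × ℤ → ℝ) (x y : ℤ × ℤ) :
    lpp w x y = sSup (pathWeights w x y) :=
  rfl

theorem pathWeights_eq_empty (h : ¬ x ≤ y) : pathWeights w x y = ∅ :=
  Set.eq_empty_of_forall_notMem fun _ ⟨n, _, h0, hn, hπ, _⟩ ↦
    h (h0 ▸ hn ▸ hπ.le_apply n le_rfl)

theorem pathWeights_self : pathWeights w x x = {(w x : EReal)} := by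
  ext s
  constructor
  · rintro ⟨n, π, h0, hn, hπ, rfl⟩
    have hlen := hπ.fst_add_snd_apply n le_rfl
    obtain rfl : n = 0 := by rw [hn, h0] at hlen; omega
    simp [h0]
  · rintro rfl
    exact ⟨0, fun _ ↦ x, rfl, rfl, fun i hi ↦ absurd hi (Nat.not_lt_zero i), by simp⟩

theorem add_mem_pathWeights_of_step {x' : ℤ × ℤ} (hstep : x' = x + e₁ ∨ x' = x + e₂) {s : EReal}
    (hs : s ∈ pathWeights w x' y) : s + w x ∈ pathWeights w x y := by
  obtain ⟨m, π, h0, hn, hπ, rfl⟩ := hs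
  refine ⟨m + 1, fun i ↦ Nat.casesOn i x π, rfl, hn, ?_, ?_⟩
  · rintro (_ | i) hi
    · show π 0 = x + e₁ ∨ π 0 = x + e₂
      rwa [h0]
    · exact hπ i (by omega)
  · rw [← EReal.coe_add, Finset.sum_range_succ' _ (m + 1)]
    rfl

theorem pathWeights_eq_image (hne : x ≠ y) :
    pathWeights w x y =
      (· + (w x : EReal)) '' (pathWeights w (x + e₁) y ∪ pathWeights w (x + e₂) y) := by
  ext s
  constructor
  · rintro ⟨_ | m, π, h0, hn, hπ, rfl⟩
    · exact absurd (h0 ▸ hn) hne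
    have htail : IsUpRight m (fun i ↦ π (i + 1)) := fun i hi ↦ hπ (i + 1) (by omega)
    refine ⟨((∑ i ∈ Finset.range (m + 1), w (π (i + 1)) : ℝ) : EReal), ?_, ?_⟩
    · rcases hπ 0 (by omega) with hs | hs <;> rw [h0] at hs
      exacts [.inl ⟨m, _, hs, hn, htail, rfl⟩, .inr ⟨m, _, hs, hn, htail, rfl⟩]
    · dsimp only
      rw [← EReal.coe_add, Finset.sum_range_succ' _ (m + 1), h0]
  · rintro ⟨_, hs | hs, rfl⟩
    exacts [add_mem_pathWeights_of_step (.inl rfl) hs, add_mem_pathWeights_of_step (.inr rfl) hs]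

end PathWeights

noncomputable def EReal.addRightOrderIso (c : ℝ) : EReal ≃o EReal where
  toFun a := a + c
  invFun a := a - c
  left_inv _ := EReal.add_sub_cancel_right
  right_inv _ := EReal.sub_add_cancel
  map_rel_iff' := (EReal.addLECancellable_coe c).add_le_add_iff_right

theorem EReal.sSup_image_add_coe (c : ℝ) (S : Set EReal) :
    sSup ((· + (c : EReal)) '' S) = sSup S + c := by
  rw [sSup_image]
  exact ((EReal.addRightOrderIso c).map_sSup S).symm

section LastPassage

variable {w : ℤ × ℤ → ℝ} {x y : ℤ × ℤ}

theorem lpp_of_not_le (h : ¬ x ≤ y) : lpp w x y = ⊥ := by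
  rw [lpp_eq_sSup_pathWeights, pathWeights_eq_empty h, sSup_empty]

theorem lpp_self : lpp w x x = w x := by
  rw [lpp_eq_sSup_pathWeights, pathWeights_self, sSup_singleton]

theorem lpp_eq_sup_add (hne : x ≠ y) :
    lpp w x y = (lpp w (x + e₁) y ⊔ lpp w (x + e₂) y) + w x := by
  rw [lpp_eq_sSup_pathWeights, pathWeights_eq_image hne, EReal.sSup_image_add_coe, sSup_union]
  rfl

theorem exists_lpp_eq_coe (w : ℤ × ℤ → ℝ) : ∀ x ≤ y, ∃ r : ℝ, lpp w x y = r :=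
  backward_induction fun x hxy ih₁ ih₂ ↦ by
    by_cases hne : x = y
    · exact ⟨w x, hne ▸ lpp_self⟩
    rw [lpp_eq_sup_add hne]
    by_cases h₁ : x + e₁ ≤ y <;> by_cases h₂ : x + e₂ ≤ y
    · obtain ⟨a, ha⟩ := ih₁ h₁
      obtain ⟨b, hb⟩ := ih₂ h₂
      exact ⟨max a b + w x, by rw [ha, hb, EReal.coe_add, EReal.coe_strictMono.monotone.map_max]⟩
    · obtain ⟨a, ha⟩ := ih₁ h₁
      exact ⟨a + w x, by rw [ha, lpp_of_not_le h₂, sup_bot_eq, EReal.coe_add]⟩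
    · obtain ⟨b, hb⟩ := ih₂ h₂
      exact ⟨b + w x, by rw [hb, lpp_of_not_le h₁, bot_sup_eq, EReal.coe_add]⟩
    · exact absurd (eq_of_le_of_not_add_le hxy h₁ h₂) hne

-- Junk value `0` when `¬ x ≤ y`.
noncomputable def lppR (w : ℤ × ℤ → ℝ) (x y : ℤ × ℤ) : ℝ :=
  (lpp w x y).toReal

theorem coe_lppR (h : x ≤ y) : (lppR w x y : EReal) = lpp w x y := by
  obtain ⟨r, hr⟩ := exists_lpp_eq_coe w x h
  rw [lppR, hr, EReal.toReal_coe]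

theorem lppR_self : lppR w x x = w x := by
  rw [lppR, lpp_self, EReal.toReal_coe]

theorem lpp_sub_lpp {x' y' : ℤ × ℤ} (h : x ≤ y) (h' : x' ≤ y') :
    lpp w x y - lpp w x' y' = ((lppR w x y - lppR w x' y' : ℝ) : EReal) := by
  rw [EReal.coe_sub, coe_lppR h, coe_lppR h']

theorem coe_lppR_eq_sup_add (h : x + e₁ ≤ y ∨ x + e₂ ≤ y) :
    (lppR w x y : EReal) = (lpp w (x + e₁) y ⊔ lpp w (x + e₂) y) + w x := by
  have hxy : x ≤ y := h.elim (le_add_e₁ x).trans (le_add_e₂ x).trans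
  have hne : x ≠ y := by
    rintro rfl
    rw [add_e₁_le_iff, add_e₂_le_iff] at h
    omega
  rw [coe_lppR hxy, lpp_eq_sup_add hne]

theorem lppR_eq_max_add (h₁ : x + e₁ ≤ y) (h₂ : x + e₂ ≤ y) :
    lppR w x y = max (lppR w (x + e₁) y) (lppR w (x + e₂) y) + w x := by
  apply EReal.coe_injective
  rw [coe_lppR_eq_sup_add (.inl h₁), EReal.coe_add, EReal.coe_strictMono.monotone.map_max,
    coe_lppR h₁, coe_lppR h₂]

theorem lppR_eq_add_of_not_add_e₂_le (h₁ : x + e₁ ≤ y) (h₂ : ¬ x + e₂ ≤ y) :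
    lppR w x y = lppR w (x + e₁) y + w x := by
  apply EReal.coe_injective
  rw [coe_lppR_eq_sup_add (.inl h₁), EReal.coe_add, coe_lppR h₁, lpp_of_not_le h₂, sup_bot_eq]

theorem lppR_eq_add_of_not_add_e₁_le (h₁ : ¬ x + e₁ ≤ y) (h₂ : x + e₂ ≤ y) :
    lppR w x y = lppR w (x + e₂) y + w x := by
  apply EReal.coe_injective
  rw [coe_lppR_eq_sup_add (.inr h₂), EReal.coe_add, coe_lppR h₂, lpp_of_not_le h₁, bot_sup_eq]

end LastPassage

section DualWeights

variable {w : ℤ × ℤ → ℝ} {u v x : ℤ × ℤ}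

theorem incIhat_add_e₁ (hux : u ≤ x) :
    incIhat w u (x + e₁) = ((lppR w u (x + e₁) - lppR w u x : ℝ) : EReal) := by
  rw [incIhat, add_sub_cancel_right, lpp_sub_lpp (hux.trans (le_add_e₁ x)) hux]

theorem incJhat_add_e₂ (hux : u ≤ x) :
    incJhat w u (x + e₂) = ((lppR w u (x + e₂) - lppR w u x : ℝ) : EReal) := by
  rw [incJhat, add_sub_cancel_right, lpp_sub_lpp (hux.trans (le_add_e₂ x)) hux]

theorem dualWt_of_add_le (hux : u ≤ x) (h₁ : x + e₁ ≤ v) (h₂ : x + e₂ ≤ v) :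
    dualWt w u v x =
      min (lppR w u (x + e₁) - lppR w u x) (lppR w u (x + e₂) - lppR w u x) := by
  rw [add_e₁_le_iff] at h₁
  rw [add_e₂_le_iff] at h₂
  rw [dualWt, if_neg (by rintro rfl; omega), if_neg (by omega), if_neg (by omega), incIhatR,
    incJhatR, incIhat_add_e₁ hux, incJhat_add_e₂ hux, EReal.toReal_coe, EReal.toReal_coe]

theorem dualWt_of_not_add_e₂_le (hux : u ≤ x) (h₁ : x + e₁ ≤ v) (h₂ : ¬ x + e₂ ≤ v) :
    dualWt w u v x = lppR w u (x + e₁) - lppR w u x := by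
  rw [add_e₁_le_iff] at h₁
  rw [add_e₂_le_iff] at h₂
  rw [dualWt, if_neg (by rintro rfl; omega), if_pos (by omega), incIhatR, incIhat_add_e₁ hux,
    EReal.toReal_coe]

theorem dualWt_of_not_add_e₁_le (hux : u ≤ x) (h₁ : ¬ x + e₁ ≤ v) (h₂ : x + e₂ ≤ v) :
    dualWt w u v x = lppR w u (x + e₂) - lppR w u x := by
  rw [add_e₁_le_iff] at h₁
  rw [add_e₂_le_iff] at h₂
  rw [dualWt, if_neg (by rintro rfl; omega), if_neg (by omega), if_pos (by omega), incJhatR,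
    incJhat_add_e₂ hux, EReal.toReal_coe]

theorem lppR_dualWt (w : ℤ × ℤ → ℝ) (u v : ℤ × ℤ) :
    ∀ x ≤ v, u ≤ x → lppR (dualWt w u v) x v = lppR w u v - lppR w u x :=
  backward_induction fun x hxv ih₁ ih₂ hux ↦ by
    have hu₁ := hux.trans (le_add_e₁ x)
    have hu₂ := hux.trans (le_add_e₂ x)
    by_cases h₁ : x + e₁ ≤ v <;> by_cases h₂ : x + e₂ ≤ v
    · rw [lppR_eq_max_add h₁ h₂, ih₁ h₁ hu₁, ih₂ h₂ hu₂, dualWt_of_add_le hux h₁ h₂,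
        max_sub_sub_left, min_sub_sub_right]
      ring
    · rw [lppR_eq_add_of_not_add_e₂_le h₁ h₂, ih₁ h₁ hu₁, dualWt_of_not_add_e₂_le hux h₁ h₂]
      ring
    · rw [lppR_eq_add_of_not_add_e₁_le h₁ h₂, ih₂ h₂ hu₂, dualWt_of_not_add_e₁_le hux h₁ h₂]
      ring
    · obtain rfl := eq_of_le_of_not_add_le hxv h₁ h₂
      rw [lppR_self, dualWt, if_pos rfl, sub_self]

end DualWeights

theorem stmt9_general (w : ℤ × ℤ → ℝ) (u v : ℤ × ℤ)
    (x : ℤ × ℤ) (hx : x ∈ Set.Icc u v) :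
    (x + (1, 0) ≤ v → incI (dualWt w u v) x v = incIhat w u (x + (1, 0))) ∧
    (x + (0, 1) ≤ v → incJ (dualWt w u v) x v = incJhat w u (x + (0, 1))) := by
  obtain ⟨hux, hxv⟩ := hx
  refine ⟨fun h₁ ↦ ?_, fun h₂ ↦ ?_⟩
  · rw [incI, lpp_sub_lpp hxv h₁, incIhat_add_e₁ hux, lppR_dualWt w u v x hxv hux,
      lppR_dualWt w u v _ h₁ (hux.trans (le_add_e₁ x)), sub_sub_sub_cancel_left]
  · rw [incJ, lpp_sub_lpp hxv h₂, incJhat_add_e₂ hux, lppR_dualWt w u v x hxv hux,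
      lppR_dualWt w u v _ h₂ (hux.trans (le_add_e₂ x)), sub_sub_sub_cancel_left]

/-- Dual weight increment identity: for `x` in the rectangle,
`I_{x,v}(w*) = Î_{u,x+e1}(w)` when `x + e1 ≤ v`, and
`J_{x,v}(w*) = Ĵ_{u,x+e2}(w)` when `x + e2 ≤ v`. -/
theorem stmt9 (w : ℤ × ℤ → ℝ) (u v : ℤ × ℤ) (huv : u ≤ v)
    (x : ℤ × ℤ) (hx : x ∈ Set.Icc u v) :
    (x + (1, 0) ≤ v → incI (dualWt w u v) x v = incIhat w u (x + (1, 0))) ∧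
    (x + (0, 1) ≤ v → incJ (dualWt w u v) x v = incJhat w u (x + (0, 1))) :=
  stmt9_general w u v x hx
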